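/- (Bieberbach) Every convex compact set in the plane with diameter d has area at most (π/4)·d², i.e. at most the area of the circular disk of diameter d. -/

import Mathlib

open MeasureTheory Metric Set Real
open scoped RealInnerProductSpace Pointwise

/-- The area of a planar set: its two-dimensional Lebesgue measure. -/
noncomputable def polyArea (K : Set (EuclideanSpace ℝ (Fin 2))) : ℝ := (volume K).toReal

/-- The perimeter of a planar convex body: the one-dimensional Hausdorff measure
of its boundary (for a convex polygon this is the sum of the lengths of its sides). -/
noncomputable def polyPerim (K : Set (EuclideanSpace ℝ (Fin 2))) : ℝ :=
  (μH[1] (frontier K)).toReal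

/-- The width of a planar set: the infimum over all unit directions `u` of the length of the
projection of the set onto the line spanned by `u`. -/
noncomputable def width (K : Set (EuclideanSpace ℝ (Fin 2))) : ℝ :=
  ⨅ u ∈ {u : EuclideanSpace ℝ (Fin 2) | ‖u‖ = 1},
    ((⨆ x : K, ⟪u, x.1⟫) - ⨅ x : K, ⟪u, x.1⟫)

/-- A planar set has constant width `d` if its projection onto every line has length `d`. -/
def HasConstantWidth (K : Set (EuclideanSpace ℝ (Fin 2))) (d : ℝ) : Prop :=
  ∀ u : EuclideanSpace ℝ (Fin 2), ‖u‖ = 1 →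
    ((⨆ x : K, ⟪u, x.1⟫) - ⨅ x : K, ⟪u, x.1⟫) = d

/-!
Translate the set so that its lowest point is the origin. It then lies in the closed upper
half-plane, so in polar coordinates only the angles in `[0, π)` carry area. If `ρ(θ)` is the
distance to the farthest point of the set on the ray of angle `θ`, the area is at most
`½ ∫₀^π ρ² = ½ ∫₀^{π/2} (ρ(θ)² + ρ(θ + π/2)²)`, and the farthest points on two perpendicular
rays are at distance `√(ρ(θ)² + ρ(θ + π/2)²) ≤ d`.
-/

open scoped ENNReal

theorem Complex.polarCoord_symm_re (p : ℝ × ℝ) :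
    (Complex.polarCoord.symm p).re = p.1 * Real.cos p.2 := by
  simp [Complex.cos_ofReal_re, Complex.sin_ofReal_re]

theorem Complex.polarCoord_symm_im (p : ℝ × ℝ) :
    (Complex.polarCoord.symm p).im = p.1 * Real.sin p.2 := by
  simp [Complex.cos_ofReal_re, Complex.sin_ofReal_re]

theorem Complex.continuous_polarCoord_symm :
    Continuous fun p : ℝ × ℝ => Complex.polarCoord.symm p := by
  simp only [Complex.polarCoord_symm_apply]
  fun_prop

theorem Complex.dist_polarCoord_symm_add_pi_div_two_sq (a b θ : ℝ) :
    dist (Complex.polarCoord.symm (a, θ)) (Complex.polarCoord.symm (b, θ + π / 2)) ^ 2 =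
      a ^ 2 + b ^ 2 := by
  rw [Complex.dist_eq, Complex.sq_norm, Complex.normSq_apply, Complex.sub_re, Complex.sub_im]
  simp only [Complex.polarCoord_symm_re, Complex.polarCoord_symm_im, Real.cos_add_pi_div_two,
    Real.sin_add_pi_div_two]
  linear_combination (a ^ 2 + b ^ 2) * Real.sin_sq_add_cos_sq θ

section AngularDensity

variable {A : Set ℂ}

noncomputable def angularDensity (A : Set ℂ) (θ : ℝ) : ℝ≥0∞ :=
  ∫⁻ r in Ioi 0, ENNReal.ofReal r * A.indicator 1 (Complex.polarCoord.symm (r, θ))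

theorem measurable_angularDensity (hA : MeasurableSet A) : Measurable (angularDensity A) :=
  (measurable_fst.ennreal_ofReal.mul ((measurable_one.indicator hA).comp
    Complex.continuous_polarCoord_symm.measurable)).lintegral_prod_left'

theorem volume_eq_lintegral_angularDensity (hA : MeasurableSet A) :
    volume A = ∫⁻ θ in Ioo (-π) π, angularDensity A θ := by
  have hmeas : Measurable fun p : ℝ × ℝ =>
      ENNReal.ofReal p.1 • A.indicator (1 : ℂ → ℝ≥0∞) (Complex.polarCoord.symm p) :=
    measurable_fst.ennreal_ofReal.smul
      ((measurable_one.indicator hA).comp Complex.continuous_polarCoord_symm.measurable)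
  rw [← lintegral_indicator_one hA, ← Complex.lintegral_comp_polarCoord_symm, polarCoord_target,
    Measure.volume_eq_prod, ← Measure.prod_restrict, lintegral_prod_symm' _ hmeas]
  rfl

theorem angularDensity_le_of_forall_le {θ R : ℝ} (hR : 0 ≤ R)
    (h : ∀ r, 0 < r → Complex.polarCoord.symm (r, θ) ∈ A → r ≤ R) :
    angularDensity A θ ≤ ENNReal.ofReal (R ^ 2 / 2) := calc
  angularDensity A θ ≤ ∫⁻ r in Ioi 0, (Ioc 0 R).indicator ENNReal.ofReal r := by
    refine setLIntegral_mono' measurableSet_Ioi fun r hr => ?_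
    by_cases hrA : Complex.polarCoord.symm (r, θ) ∈ A
    · rw [indicator_of_mem hrA, indicator_of_mem (show r ∈ Ioc 0 R from ⟨hr, h r hr hrA⟩),
        Pi.one_apply, mul_one]
    · rw [indicator_of_notMem hrA, mul_zero]
      exact bot_le
  _ = ∫⁻ r in Ioc 0 R, ENNReal.ofReal r := by
    rw [lintegral_indicator measurableSet_Ioc, Measure.restrict_restrict measurableSet_Ioc,
      inter_eq_self_of_subset_left Ioc_subset_Ioi_self]
  _ = ENNReal.ofReal (R ^ 2 / 2) := by
    have hnonneg : 0 ≤ᵐ[volume.restrict (Ioc 0 R)] fun r : ℝ => r :=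
      (ae_restrict_mem measurableSet_Ioc).mono fun r hr => hr.1.le
    rw [← ofReal_integral_eq_lintegral_ofReal continuous_id'.integrableOn_Ioc hnonneg,
      ← intervalIntegral.integral_of_le hR, integral_id]
    ring_nf

theorem angularDensity_eq_zero_of_im_nonneg (him : ∀ z ∈ A, 0 ≤ z.im) {θ : ℝ}
    (hθ : θ ∈ Ioo (-π) 0) : angularDensity A θ = 0 := by
  have hsin : sin θ < 0 := sin_neg_of_neg_of_neg_pi_lt hθ.2 hθ.1
  refine (setLIntegral_congr_fun measurableSet_Ioi fun r (hr : 0 < r) => ?_).trans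
    lintegral_zero
  have hrA : Complex.polarCoord.symm (r, θ) ∉ A := fun hrA => by
    have := him _ hrA
    rw [Complex.polarCoord_symm_im] at this
    nlinarith
  rw [indicator_of_notMem hrA, mul_zero]

theorem IsCompact.exists_isGreatest_radius (hA : IsCompact A) (h0 : 0 ∈ A) (θ : ℝ) :
    ∃ R, IsGreatest {r | 0 ≤ r ∧ Complex.polarCoord.symm (r, θ) ∈ A} R := by
  refine IsCompact.exists_isGreatest ?_ ⟨0, le_rfl, by simpa using h0⟩
  have hpolar : Continuous fun r : ℝ => Complex.polarCoord.symm (r, θ) :=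
    Complex.continuous_polarCoord_symm.comp (by fun_prop)
  refine (isCompact_Icc (a := 0) (b := diam A)).of_isClosed_subset
    (isClosed_Ici.inter (hA.isClosed.preimage hpolar)) fun r ⟨hr, hrA⟩ => ⟨hr, ?_⟩
  simpa [abs_of_nonneg hr] using dist_le_diam_of_mem hA.isBounded hrA h0

theorem angularDensity_add_angularDensity_add_pi_div_two_le (hA : IsCompact A) (h0 : 0 ∈ A)
    (θ : ℝ) :
    angularDensity A θ + angularDensity A (θ + π / 2) ≤ ENNReal.ofReal (diam A ^ 2 / 2) := by
  obtain ⟨R, ⟨hR, hRA⟩, hRmax⟩ := hA.exists_isGreatest_radius h0 θ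
  obtain ⟨S, ⟨hS, hSA⟩, hSmax⟩ := hA.exists_isGreatest_radius h0 (θ + π / 2)
  have hRS : R ^ 2 + S ^ 2 ≤ diam A ^ 2 := by
    rw [← Complex.dist_polarCoord_symm_add_pi_div_two_sq]
    gcongr
    exact dist_le_diam_of_mem hA.isBounded hRA hSA
  calc _ ≤ ENNReal.ofReal (R ^ 2 / 2) + ENNReal.ofReal (S ^ 2 / 2) :=
        add_le_add (angularDensity_le_of_forall_le hR fun r hr hrA => hRmax ⟨hr.le, hrA⟩)
          (angularDensity_le_of_forall_le hS fun r hr hrA => hSmax ⟨hr.le, hrA⟩)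
    _ = ENNReal.ofReal ((R ^ 2 + S ^ 2) / 2) := by
      rw [← ENNReal.ofReal_add (by positivity) (by positivity), add_div]
    _ ≤ _ := ENNReal.ofReal_le_ofReal (by linarith)

theorem volume_le_pi_div_four_mul_diam_sq_of_im_nonneg (hA : IsCompact A)
    (h0 : 0 ∈ A) (him : ∀ z ∈ A, 0 ≤ z.im) : volume A ≤ ENNReal.ofReal (π / 4 * diam A ^ 2) := by
  set g := angularDensity A
  have hg : Measurable g := measurable_angularDensity hA.measurableSet
  have hsplit : Ico 0 π = Ico 0 (π / 2) ∪ Ico (π / 2) π :=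
    (Ico_union_Ico_eq_Ico (by positivity) (by linarith [pi_pos])).symm
  have hshift : ∫⁻ θ in Ico (π / 2) π, g θ = ∫⁻ θ in Ico 0 (π / 2), g (θ + π / 2) := by
    rw [← (measurePreserving_add_right volume (π / 2)).setLIntegral_comp_preimage
      measurableSet_Ico hg, preimage_add_const_Ico, sub_self, sub_half]
  calc volume A = ∫⁻ θ in Ioo (-π) π, g θ := volume_eq_lintegral_angularDensity hA.measurableSet
    _ = ∫⁻ θ in Ico 0 π, g θ := by
      have hdisj : Disjoint (Ioo (-π) 0) (Ico 0 π) :=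
        (Iio_disjoint_Ici le_rfl).mono Ioo_subset_Iio_self Ico_subset_Ici_self
      rw [← Ioo_union_Ico_eq_Ioo (neg_neg_of_pos pi_pos) pi_pos.le,
        lintegral_union measurableSet_Ico hdisj,
        setLIntegral_congr_fun measurableSet_Ioo fun θ hθ =>
          angularDensity_eq_zero_of_im_nonneg him hθ,
        lintegral_zero, zero_add]
    _ = (∫⁻ θ in Ico 0 (π / 2), g θ) + ∫⁻ θ in Ico 0 (π / 2), g (θ + π / 2) := by
      rw [hsplit, lintegral_union measurableSet_Ico Ico_disjoint_Ico_same, hshift]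
    _ = ∫⁻ θ in Ico 0 (π / 2), (g θ + g (θ + π / 2)) :=
      (lintegral_add_left hg fun θ => g (θ + π / 2)).symm
    _ ≤ ∫⁻ θ in Ico 0 (π / 2), ENNReal.ofReal (diam A ^ 2 / 2) :=
      lintegral_mono fun θ => angularDensity_add_angularDensity_add_pi_div_two_le hA h0 θ
    _ = ENNReal.ofReal (π / 4 * diam A ^ 2) := by
      rw [setLIntegral_const, Real.volume_Ico, sub_zero,
        ← ENNReal.ofReal_mul (by positivity)]
      ring_nf

theorem IsCompact.volume_le_pi_div_four_mul_diam_sq (hA : IsCompact A) :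
    volume A ≤ ENNReal.ofReal (π / 4 * diam A ^ 2) := by
  rcases A.eq_empty_or_nonempty with rfl | hne
  · simp
  obtain ⟨z₀, hz₀, hmin⟩ := hA.exists_isMinOn hne Complex.continuous_im.continuousOn
  have hA' : IsCompact ((· + z₀) ⁻¹' A) := (Homeomorph.addRight z₀).isCompact_preimage.2 hA
  have hdiam : diam ((· + z₀) ⁻¹' A) = diam A := (IsometryEquiv.addRight z₀).diam_preimage A
  have h := volume_le_pi_div_four_mul_diam_sq_of_im_nonneg hA' (by simpa using hz₀)
    fun z hz => by simpa using hmin hz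
  rwa [hdiam, measure_preimage_add_right] at h

end AngularDensity

theorem bieberbach_general (K : Set (EuclideanSpace ℝ (Fin 2)))
    (hcomp : IsCompact K)
    (d : ℝ) (hd : Metric.diam K = d) :
    polyArea K ≤ (π / 4) * d ^ 2 := by
  let e := Complex.orthonormalBasisOneI.repr
  have hvol : volume (e ⁻¹' K) = volume K :=
    Complex.orthonormalBasisOneI.measurePreserving_repr.measure_preimage
      hcomp.measurableSet.nullMeasurableSet
  have hdiam : diam (e ⁻¹' K) = diam K := e.toIsometryEquiv.diam_preimage K
  have hK : IsCompact (e ⁻¹' K) := e.toHomeomorph.isCompact_preimage.2 hcomp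
  have h := hK.volume_le_pi_div_four_mul_diam_sq
  rw [hvol, hdiam, hd] at h
  exact ENNReal.toReal_le_of_le_ofReal (by positivity) h

/-- Bieberbach's inequality: every convex compact set in the plane with diameter `d`
has area at most `(π/4)·d²`, the area of the disk of diameter `d`. -/
theorem bieberbach (K : Set (EuclideanSpace ℝ (Fin 2)))
    (hconv : Convex ℝ K) (hcomp : IsCompact K)
    (d : ℝ) (hd : Metric.diam K = d) :
    polyArea K ≤ (π / 4) * d ^ 2 :=
  bieberbach_general K hcomp d hd
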